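/- arXiv:2201.01507 — 6 statements merged into one kernel-verified Lean document; each statement's English description precedes it below -/
import Mathlib

section
/- Hartogs extension theorem: Let E be a complex Banach space, let Δ be the open unit ball (disk) of ℂ, let K ⊆ Δ be a compact set, let U ⊆ E be a nonempty open connected set, and let A ⊆ U be a nonempty open set. Set V := ((Δ \ K) ×ˢ U) ∪ (Δ ×ˢ A) ⊆ ℂ × E (an open set). If f : ℂ × E → ℂ is complex differentiable at every point of V, then there exists F : ℂ × E → ℂ that is complex differentiable at every point of Δ ×ˢ U and agrees with f on V. -/
/-!
Choose `r < 1` with `K ⊆ ball 0 r` and let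
`G (z, w) = (2πi)⁻¹ ∮_{|ζ| = r} (ζ - z)⁻¹ f (ζ, w) dζ`. The circle `|ζ| = r` lies in `Δ \ K`, so
differentiating under the integral sign (dominated by Cauchy estimates) shows that `G` is
holomorphic on `ball 0 r ×ˢ U`. For `w ∈ A` the slice `f (·, w)` is holomorphic on all of `Δ`, so
`G = f` there by Cauchy's integral formula; for fixed `z ∉ K`, the slices `G (z, ·)` and
`f (z, ·)` are holomorphic on the connected set `U` and agree on `A`, hence on all of `U`.
Gluing `G` on `ball 0 r ×ˢ U` with `f` elsewhere gives the extension.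
-/

open Metric Set Filter Topology Real

theorem IsCompact.exists_thickening_subset_forall_norm_le {X F : Type*} [PseudoMetricSpace X]
    [SeminormedAddCommGroup F] {C Ω : Set X} {Φ : X → F} (hC : IsCompact C) (hΩ : IsOpen Ω)
    (hCΩ : C ⊆ Ω) (hΦ : ContinuousOn Φ Ω) :
    ∃ δ > 0, ∃ M, thickening δ C ⊆ Ω ∧ ∀ q ∈ thickening δ C, ‖Φ q‖ ≤ M := by
  obtain ⟨M, hM⟩ := hC.exists_bound_of_continuousOn (hΦ.mono hCΩ)
  obtain ⟨δ, hδ, hsub⟩ := hC.exists_thickening_subset_open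
    (hΦ.isOpen_inter_preimage hΩ (isOpen_ball (x := 0) (ε := M + 1)))
    fun q hq => ⟨hCΩ hq, mem_ball_zero_iff.2 ((hM q hq).trans_lt (lt_add_one M))⟩
  exact ⟨δ, hδ, M + 1, fun q hq => (hsub hq).1,
    fun q hq => (mem_ball_zero_iff.1 (hsub hq).2).le⟩

theorem DifferentiableOn.piecewise_union_of_isOpen {𝕜 X Y : Type*} [NontriviallyNormedField 𝕜]
    [NormedAddCommGroup X] [NormedSpace 𝕜 X] [NormedAddCommGroup Y] [NormedSpace 𝕜 Y]
    {s t : Set X} [∀ x, Decidable (x ∈ s)] {f g : X → Y} (hf : DifferentiableOn 𝕜 f s)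
    (hg : DifferentiableOn 𝕜 g t) (hs : IsOpen s) (ht : IsOpen t) (hfg : EqOn f g (t ∩ s)) :
    DifferentiableOn 𝕜 (s.piecewise f g) (s ∪ t) :=
  (hf.congr (piecewise_eqOn s f g)).union_of_isOpen
    (hg.congr ((eqOn_piecewise s).2 ⟨hfg, fun _ _ => rfl⟩)) hs ht

namespace Complex

section Banach

variable {G F : Type*} [NormedAddCommGroup G] [NormedSpace ℂ G] [NormedAddCommGroup F]
  [NormedSpace ℂ F]

theorem norm_fderiv_le_of_forall_dist_le {g : G → F} {c : G} {R M : ℝ} {a : F} (hR : 0 < R)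
    (hg : DifferentiableOn ℂ g (ball c R)) (hM : ∀ x ∈ ball c R, dist (g x) a ≤ M) :
    ‖fderiv ℂ g c‖ ≤ 2 * M / R :=
  norm_fderiv_le_div_of_mapsTo_ball hg (fun x hx => mem_closedBall.2 <|
    (dist_triangle_right _ _ a).trans (by linarith [hM x hx, hM c (mem_ball_self hR)])) hR

theorem continuousOn_fderiv_of_differentiableOn {g : G → F} {s : Set G} (hs : IsOpen s)
    (hg : DifferentiableOn ℂ g s) : ContinuousOn (fderiv ℂ g) s := by
  intro p hp
  refine ContinuousAt.continuousWithinAt (Metric.tendsto_nhds.2 fun ε hε => ?_)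
  set D := fderiv ℂ g p
  have hlo := (hg.differentiableAt (hs.mem_nhds hp)).hasFDerivAt.isLittleO.def
    (show 0 < ε / 8 by positivity)
  obtain ⟨δ, hδ, hball⟩ := Metric.eventually_nhds_iff_ball.1 (hlo.and (hs.mem_nhds hp))
  filter_upwards [ball_mem_nhds p (half_pos hδ)] with q hq
  have hsub : ball q (δ / 2) ⊆ ball p δ := fun x hx =>
    mem_ball.2 (by linarith [dist_triangle x q p, mem_ball.1 hx, mem_ball.1 hq])
  -- the Cauchy estimate for `g - D`, which is nearly constant near `p`
  have hosc : ∀ x ∈ ball q (δ / 2), dist ((g - ⇑D) x) ((g - ⇑D) p) ≤ ε / 8 * δ := by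
    intro x hx
    rw [dist_eq_norm]
    calc ‖(g - ⇑D) x - (g - ⇑D) p‖ = ‖g x - g p - D (x - p)‖ := by
          simp only [Pi.sub_apply, map_sub]; abel_nf
      _ ≤ ε / 8 * ‖x - p‖ := (hball x (hsub hx)).1
      _ ≤ ε / 8 * δ := by
          gcongr; rw [← dist_eq_norm]; exact (mem_ball.1 (hsub hx)).le
  have hderiv : fderiv ℂ (g - ⇑D) q = fderiv ℂ g q - D := by
    rw [fderiv_sub (hg.differentiableAt (hs.mem_nhds (hball q (hsub (mem_ball_self
      (half_pos hδ)))).2)) D.differentiableAt, D.fderiv]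
  have hle := norm_fderiv_le_of_forall_dist_le (half_pos hδ)
    ((hg.mono fun x hx => (hball x (hsub hx)).2).sub D.differentiable.differentiableOn) hosc
  rw [hderiv] at hle
  rw [dist_eq_norm]
  calc ‖fderiv ℂ g q - D‖ ≤ 2 * (ε / 8 * δ) / (δ / 2) := hle
    _ = ε / 2 := by field_simp; ring
    _ < ε := by linarith

variable [CompleteSpace F]

theorem eqOn_ball_of_eventuallyEq {f g : G → F} {c : G} {R : ℝ}
    (hf : DifferentiableOn ℂ f (ball c R)) (hg : DifferentiableOn ℂ g (ball c R))
    (hfg : f =ᶠ[𝓝 c] g) : EqOn f g (ball c R) := by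
  intro x hx
  -- restrict to the complex line through `c` and `x`, where the one-variable theorem applies
  set L := (LinearMap.toSpanSingleton ℂ G (x - c)).restrictScalars ℝ
  set T := L ⁻¹' ball 0 R
  have hline : Continuous fun t : ℂ => c + t • (x - c) := by fun_prop
  have hmem : ∀ t, t ∈ T ↔ c + t • (x - c) ∈ ball c R := fun t => by
    simp [T, L, dist_eq_norm]
  have hT : IsOpen T := by
    convert (isOpen_ball : IsOpen (ball c R)).preimage hline using 1
    exact Set.ext hmem
  have h0 : (0 : ℂ) ∈ T :=
    (hmem 0).2 (by simpa using mem_ball_self (x := c) (pos_of_mem_ball hx))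
  have hcomp : ∀ h : G → F, DifferentiableOn ℂ h (ball c R) →
      AnalyticOnNhd ℂ (fun t => h (c + t • (x - c))) T := fun h hh =>
    (hh.comp (by fun_prop : Differentiable ℂ fun t : ℂ => c + t • (x - c)).differentiableOn
      fun t ht => (hmem t).1 ht).analyticOnNhd hT
  have heq := (hcomp f hf).eqOn_of_preconnected_of_eventuallyEq (hcomp g hg)
    ((convex_ball 0 R).linear_preimage L).isPreconnected h0
    (hfg.comp_tendsto (by simpa using hline.tendsto 0))
  simpa using heq ((hmem 1).2 (by simpa using hx))

theorem eqOn_of_isPreconnected_of_eventuallyEq {f g : G → F} {U : Set G} (hU : IsOpen U)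
    (hU' : IsPreconnected U) (hf : DifferentiableOn ℂ f U) (hg : DifferentiableOn ℂ g U)
    {a : G} (ha : a ∈ U) (hfg : f =ᶠ[𝓝 a] g) : EqOn f g U := by
  have hclosure : closure {x | f =ᶠ[𝓝 x] g} ∩ U ⊆ {x | f =ᶠ[𝓝 x] g} := by
    rintro x ⟨hx, hxU⟩
    obtain ⟨ε, hε, hεU⟩ := Metric.isOpen_iff.1 hU x hxU
    obtain ⟨y, hy, hxy⟩ := Metric.mem_closure_iff.1 hx (ε / 2) (half_pos hε)
    have hsub : ball y (ε / 2) ⊆ U := fun z hz => hεU <| mem_ball.2 <| by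
      linarith [dist_triangle z y x, mem_ball.1 hz, dist_comm x y]
    exact eventuallyEq_of_mem (isOpen_ball.mem_nhds (mem_ball.2 hxy))
      (eqOn_ball_of_eventuallyEq (hf.mono hsub) (hg.mono hsub) hy)
  exact fun x hx => EventuallyEq.eq_of_nhds (hU'.subset_of_closure_inter_subset
    isOpen_setOfPred_eventually_nhds ⟨a, ha, hfg⟩ hclosure hx)

theorem eqOn_prod_of_isPreconnected {X : Type*} [NormedAddCommGroup X] [NormedSpace ℂ X]
    {S : Set X} {U A : Set G} (hU : IsOpen U) (hU' : IsPreconnected U) (hA : IsOpen A)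
    (hAne : A.Nonempty) (hAU : A ⊆ U) {f g : X × G → F} (hf : DifferentiableOn ℂ f (S ×ˢ U))
    (hg : DifferentiableOn ℂ g (S ×ˢ U)) (hfg : EqOn f g (S ×ˢ A)) : EqOn f g (S ×ˢ U) := by
  rintro ⟨z, w⟩ ⟨hz, hw⟩
  obtain ⟨a, ha⟩ := hAne
  have hslice : DifferentiableOn ℂ (fun w : G => (z, w)) U :=
    (differentiableOn_const z).prodMk differentiableOn_id
  exact eqOn_of_isPreconnected_of_eventuallyEq (f := fun w => f (z, w)) (g := fun w => g (z, w))
    hU hU' (hf.comp hslice fun w hw => ⟨hz, hw⟩) (hg.comp hslice fun w hw => ⟨hz, hw⟩) (hAU ha)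
    (eventuallyEq_of_mem (hA.mem_nhds ha) fun w hw => hfg ⟨hz, hw⟩) hw

end Banach

section ParametricIntegral

variable {P H F : Type*} [NormedAddCommGroup P] [NormedSpace ℂ P] [NormedAddCommGroup H]
  [NormedSpace ℂ H] [NormedAddCommGroup F] [NormedSpace ℂ F]

open ContinuousLinearMap intervalIntegral in
theorem differentiableAt_intervalIntegral_of_differentiableOn {Φ : P × H → F}
    {Ω : Set (P × H)} (hΩ : IsOpen Ω) (hΦ : DifferentiableOn ℂ Φ Ω) {γ : ℝ → P}
    (hγ : Continuous γ) {a b : ℝ} {x₀ : H} (hγΩ : ∀ t ∈ uIcc a b, (γ t, x₀) ∈ Ω) :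
    DifferentiableAt ℂ (fun x => ∫ t in a..b, Φ (γ t, x)) x₀ := by
  obtain ⟨δ, hδ, M, hthick, hM⟩ :=
    ((isCompact_uIcc (a := a) (b := b)).image (by fun_prop : Continuous fun t => (γ t, x₀))
      ).exists_thickening_subset_forall_norm_le hΩ (image_subset_iff.2 hγΩ) hΦ.continuousOn
  have hball : ∀ t ∈ uIcc a b, ∀ x ∈ ball x₀ (δ / 2),
      ball (γ t, x) (δ / 2) ⊆ thickening δ ((fun t => (γ t, x₀)) '' uIcc a b) := by
    intro t ht x hx q hq
    refine mem_thickening_iff.2 ⟨_, mem_image_of_mem _ ht, ?_⟩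
    have : dist (γ t, x) (γ t, x₀) = dist x x₀ := by simp [Prod.dist_eq]
    linarith [dist_triangle q (γ t, x) (γ t, x₀), mem_ball.1 hq, mem_ball.1 hx]
  have hmem : ∀ t ∈ uIcc a b, ∀ x ∈ ball x₀ (δ / 2), (γ t, x) ∈ Ω := fun t ht x hx =>
    hthick (hball t ht x hx (mem_ball_self (half_pos hδ)))
  have hcont : ∀ x ∈ ball x₀ (δ / 2), ContinuousOn (fun t => Φ (γ t, x)) (uIcc a b) :=
    fun x hx => hΦ.continuousOn.comp (by fun_prop) fun t ht => hmem t ht x hx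
  have hfderiv : ∀ t ∈ uIcc a b, ∀ x ∈ ball x₀ (δ / 2),
      ‖(fderiv ℂ Φ (γ t, x)).comp (inr ℂ P H)‖ ≤ 2 * M / (δ / 2) := by
    intro t ht x hx
    refine (opNorm_comp_le _ _).trans <|
      (mul_le_of_le_one_right (norm_nonneg _) (norm_inr_le_one ℂ P H)).trans ?_
    exact norm_fderiv_le_of_forall_dist_le (a := 0) (half_pos hδ)
      (hΦ.mono ((hball t ht x hx).trans hthick))
      fun q hq => (dist_zero_right (Φ q)).trans_le (hM q (hball t ht x hx hq))
  have hfderiv_cont : ContinuousOn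
      (fun t => (fderiv ℂ Φ (γ t, x₀)).comp (inr ℂ P H)) (uIcc a b) :=
    ((continuousOn_fderiv_of_differentiableOn hΩ hΦ).comp (by fun_prop)
      fun t ht => hmem t ht x₀ (mem_ball_self (half_pos hδ))).clm_comp continuousOn_const
  refine (hasFDerivAt_integral_of_dominated_of_fderiv_le (μ := MeasureTheory.volume)
    (F' := fun x t => (fderiv ℂ Φ (γ t, x)).comp (inr ℂ P H))
    (ball_mem_nhds x₀ (half_pos hδ))
    (eventually_of_mem (ball_mem_nhds x₀ (half_pos hδ)) fun x hx =>
      ((hcont x hx).mono uIoc_subset_uIcc).aestronglyMeasurable measurableSet_uIoc)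
    (hcont x₀ (mem_ball_self (half_pos hδ))).intervalIntegrable
    ((hfderiv_cont.mono uIoc_subset_uIcc).aestronglyMeasurable measurableSet_uIoc)
    (MeasureTheory.ae_of_all _ fun t ht x hx => hfderiv t (uIoc_subset_uIcc ht) x hx)
    intervalIntegrable_const
    (MeasureTheory.ae_of_all _ fun t ht x hx => ?_)).differentiableAt
  exact (hΦ.differentiableAt (hΩ.mem_nhds (hmem t (uIoc_subset_uIcc ht) x hx))).hasFDerivAt.comp
    x (hasFDerivAt_prodMk_right (γ t) x)

end ParametricIntegral

section CauchyIntegralFst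

variable {E F : Type*} [NormedAddCommGroup F] [NormedSpace ℂ F] {c : ℂ} {r : ℝ}
  {f : ℂ × E → F} {z : ℂ} {w : E}

noncomputable def cauchyIntegralFst (c : ℂ) (r : ℝ) (f : ℂ × E → F) (p : ℂ × E) : F :=
  (2 * π * I : ℂ)⁻¹ • ∮ ζ in C(c, r), (ζ - p.1)⁻¹ • f (ζ, p.2)

theorem differentiableAt_cauchyIntegralFst [NormedAddCommGroup E] [NormedSpace ℂ E]
    {V : Set (ℂ × E)} (hV : IsOpen V) (hf : DifferentiableOn ℂ f V) (hz : z ∈ ball c r)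
    (hw : ∀ ζ ∈ sphere c r, (ζ, w) ∈ V) :
    DifferentiableAt ℂ (cauchyIntegralFst c r f) (z, w) := by
  -- the integrand of `∮` in the `θ`-parametrisation, with `deriv (circleMap c r) θ = (ζ - c) * I`
  set Φ : ℂ × (ℂ × E) → F := fun q =>
    ((q.1 - c) * I) • (q.1 - q.2.1)⁻¹ • f (q.1, q.2.2)
  set Ω := {q : ℂ × (ℂ × E) | q.1 ≠ q.2.1 ∧ (q.1, q.2.2) ∈ V}
  have hΩ : IsOpen Ω :=
    (isOpen_ne_fun (by fun_prop) (by fun_prop)).inter (hV.preimage (by fun_prop))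
  have hΦ : DifferentiableOn ℂ Φ Ω := fun q hq => by
    have hne : q.1 - q.2.1 ≠ 0 := sub_ne_zero.2 hq.1
    have hfq : DifferentiableAt ℂ f (q.1, q.2.2) := hf.differentiableAt (hV.mem_nhds hq.2)
    exact DifferentiableAt.differentiableWithinAt (by fun_prop (disch := assumption))
  have hcircle : ∀ θ, (circleMap c r θ, (z, w)) ∈ Ω := fun θ => by
    have hθ := circleMap_mem_sphere c (pos_of_mem_ball hz).le θ
    refine ⟨fun (h : circleMap c r θ = z) => ?_, hw _ hθ⟩
    rw [h, mem_sphere] at hθ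
    exact (mem_ball.1 hz).ne hθ
  have hint : cauchyIntegralFst c r f =
      fun p => (2 * π * I : ℂ)⁻¹ • ∫ θ in 0..2 * π, Φ (circleMap c r θ, p) := by
    funext p
    simp [Φ, cauchyIntegralFst, circleIntegral, deriv_circleMap, circleMap_sub_center]
  rw [hint]
  exact (differentiableAt_intervalIntegral_of_differentiableOn hΩ hΦ (continuous_circleMap c r)
    fun θ _ => hcircle θ).const_smul _

theorem cauchyIntegralFst_eq [CompleteSpace F]
    (hf : DifferentiableOn ℂ (fun ζ => f (ζ, w)) (closedBall c r)) (hz : z ∈ ball c r) :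
    cauchyIntegralFst c r f (z, w) = f (z, w) := by
  rw [cauchyIntegralFst, hf.circleIntegral_sub_inv_smul hz, inv_smul_smul₀ two_pi_I_ne_zero]

end CauchyIntegralFst

end Complex

open Complex in
theorem hartogs_extension_general {E : Type*} [NormedAddCommGroup E] [NormedSpace ℂ E]
    (K : Set ℂ) (hK : IsCompact K) (hKsub : K ⊆ ball (0 : ℂ) 1)
    (U : Set E) (hUopen : IsOpen U) (hUconn : IsConnected U)
    (A : Set E) (hAopen : IsOpen A) (hAne : A.Nonempty) (hAU : A ⊆ U)
    (f : ℂ × E → ℂ)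
    (hf : DifferentiableOn ℂ f (((ball (0 : ℂ) 1 \ K) ×ˢ U) ∪ (ball (0 : ℂ) 1 ×ˢ A))) :
    ∃ F : ℂ × E → ℂ, DifferentiableOn ℂ F (ball (0 : ℂ) 1 ×ˢ U) ∧
      EqOn F f (((ball (0 : ℂ) 1 \ K) ×ˢ U) ∪ (ball (0 : ℂ) 1 ×ˢ A)) := by
  classical
  set V := ((ball (0 : ℂ) 1 \ K) ×ˢ U) ∪ (ball (0 : ℂ) 1 ×ˢ A)
  have hV : IsOpen V :=
    ((isOpen_ball.sdiff hK.isClosed).prod hUopen).union (isOpen_ball.prod hAopen)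
  obtain ⟨r, ⟨-, hr1⟩, hKr⟩ := exists_pos_lt_subset_ball one_pos hK.isClosed hKsub
  set G := cauchyIntegralFst 0 r f
  have hsphere : sphere 0 r ⊆ ball 0 1 \ K := fun ζ hζ =>
    ⟨sphere_subset_ball hr1 hζ, fun hζK => (mem_ball.1 (hKr hζK)).ne (mem_sphere.1 hζ)⟩
  have hG : DifferentiableOn ℂ G (ball 0 r ×ˢ U) := fun p hp =>
    (differentiableAt_cauchyIntegralFst hV hf hp.1 fun ζ hζ =>
      Or.inl ⟨hsphere hζ, hp.2⟩).differentiableWithinAt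
  have hGA : EqOn G f (ball 0 r ×ˢ A) := fun ⟨z, w⟩ ⟨hz, hw⟩ =>
    cauchyIntegralFst_eq (hf.comp (differentiableOn_id.prodMk (differentiableOn_const w))
      fun ζ hζ => Or.inr ⟨closedBall_subset_ball hr1 hζ, hw⟩) hz
  have hannulus : (ball 0 r \ K) ×ˢ U ⊆ (ball 0 1 \ K) ×ˢ U :=
    prod_mono (sdiff_subset_sdiff_left (ball_subset_ball hr1.le)) subset_rfl
  have hGK : EqOn G f ((ball 0 r \ K) ×ˢ U) :=
    eqOn_prod_of_isPreconnected hUopen hUconn.isPreconnected hAopen hAne hAU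
      (hG.mono (prod_mono sdiff_subset subset_rfl)) (hf.mono (hannulus.trans subset_union_left))
      (hGA.mono (prod_mono sdiff_subset subset_rfl))
  refine ⟨(ball 0 r ×ˢ U).piecewise G f, ?_, (eqOn_piecewise _).2 ⟨?_, fun _ _ => rfl⟩⟩
  · refine (hG.piecewise_union_of_isOpen (hf.mono subset_union_left) (isOpen_ball.prod hUopen)
      ((isOpen_ball.sdiff hK.isClosed).prod hUopen)
      fun p hp => hGK ⟨⟨hp.2.1, hp.1.1.2⟩, hp.2.2⟩).mono ?_
    rintro ⟨z, w⟩ ⟨hz, hw⟩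
    by_cases hzK : z ∈ K
    exacts [Or.inl ⟨hKr hzK, hw⟩, Or.inr ⟨⟨hz, hzK⟩, hw⟩]
  · rintro p ⟨hp | hp, hps⟩
    exacts [hGK ⟨⟨hps.1, hp.1.2⟩, hp.2⟩, hGA ⟨hps.1, hp.2⟩]

/-- Hartogs extension theorem (Remark 1.3f): a function holomorphic on
`((Δ \ K) ×ˢ U) ∪ (Δ ×ˢ A)` extends holomorphically to `Δ ×ˢ U`. -/
theorem hartogs_extension {E : Type*} [NormedAddCommGroup E] [NormedSpace ℂ E]
    [CompleteSpace E]
    (K : Set ℂ) (hK : IsCompact K) (hKsub : K ⊆ ball (0 : ℂ) 1)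
    (U : Set E) (hUopen : IsOpen U) (hUconn : IsConnected U) (hUne : U.Nonempty)
    (A : Set E) (hAopen : IsOpen A) (hAne : A.Nonempty) (hAU : A ⊆ U)
    (f : ℂ × E → ℂ)
    (hf : DifferentiableOn ℂ f (((ball (0 : ℂ) 1 \ K) ×ˢ U) ∪ (ball (0 : ℂ) 1 ×ˢ A))) :
    ∃ F : ℂ × E → ℂ, DifferentiableOn ℂ F (ball (0 : ℂ) 1 ×ˢ U) ∧
      EqOn F f (((ball (0 : ℂ) 1 \ K) ×ˢ U) ∪ (ball (0 : ℂ) 1 ×ˢ A)) :=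
  hartogs_extension_general K hK hKsub U hUopen hUconn A hAopen hAne hAU f hf
end

section
/- Let E be a complex Banach space, U ⊆ E an open set, r > 0, and W ⊆ ℂ × E an open set containing (sphere 0 r) ×ˢ U (the product of the circle of radius r centered at 0 in ℂ with U). Suppose f : ℂ × E → ℂ is complex differentiable at every point of W. Define F : ℂ × E → ℂ by F(z, w) := (2πi)⁻¹ · ∮_{ζ ∈ C(0,r)} f(ζ, w) / (ζ − z) dζ, the circle integral over the circle of radius r centered at 0. Then: (a) F is complex differentiable at every point of (ball 0 r) ×ˢ U; and (b) for every w ∈ U such that z ↦ f(z, w) is complex differentiable on an open set containing the closed ball of radius r centered at 0, one has F(z, w) = f(z, w) for all z in ball 0 r. -/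
/-!
`F` is the circle integral of the kernel `f (ζ, w) / (ζ - z)`, which is jointly holomorphic in
`((z, w), ζ)` near `{p} ×ˢ sphere 0 r`. Differentiation under the integral sign needs a uniform
bound on the parameter derivative of the kernel and continuity of that derivative along the
circle; both follow from Cauchy estimates on complex lines, which in a Banach space also show that
holomorphic functions have a continuous Fréchet derivative. Part (b) is the one-variable Cauchy
integral formula.
-/

open Metric Set Filter Topology

section CauchyEstimates

variable {E F : Type*} [NormedAddCommGroup E] [NormedSpace ℂ E]
  [NormedAddCommGroup F] [NormedSpace ℂ F]

/-- Reduces to the one-variable Cauchy estimate on the complex line through `c` in each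
direction `v`. -/
theorem norm_fderiv_le_of_forall_mem_ball_norm_le {f : E → F} {c : E} {δ M : ℝ} (hδ : 0 < δ)
    (hd : DifferentiableOn ℂ f (ball c δ)) (hM : ∀ x ∈ ball c δ, ‖f x‖ ≤ M) :
    ‖fderiv ℂ f c‖ ≤ 2 * M / δ := by
  have hM0 : 0 ≤ M := (norm_nonneg _).trans (hM c (mem_ball_self hδ))
  refine ContinuousLinearMap.opNorm_le_bound _ (by positivity) fun v => ?_
  rcases eq_or_ne v 0 with rfl | hv
  · simp
  have hv' : 0 < ‖v‖ := norm_pos_iff.2 hv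
  set ρ : ℝ := δ / (2 * ‖v‖) with hρdef
  have hρ : 0 < ρ := by positivity
  have hline : ∀ t ∈ closedBall (0 : ℂ) ρ, c + t • v ∈ ball c δ := by
    intro t ht
    rw [mem_closedBall_zero_iff] at ht
    rw [mem_ball, dist_self_add_left, norm_smul]
    calc ‖t‖ * ‖v‖ ≤ ρ * ‖v‖ := by gcongr
      _ = δ / 2 := by rw [hρdef]; field_simp
      _ < δ := by linarith
  have hdline : DifferentiableOn ℂ (fun t : ℂ => f (c + t • v)) (closedBall 0 ρ) := fun t ht =>
    ((hd.differentiableAt (isOpen_ball.mem_nhds (hline t ht))).comp t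
      (by fun_prop)).differentiableWithinAt
  have hderiv : HasDerivAt (fun t : ℂ => f (c + t • v)) (fderiv ℂ f c v) 0 := by
    have hc : DifferentiableAt ℂ f (c + (0 : ℂ) • v) := by
      simpa using hd.differentiableAt (isOpen_ball.mem_nhds (mem_ball_self hδ))
    have h := hc.hasFDerivAt.comp_hasDerivAt (0 : ℂ)
      (((hasDerivAt_id (0 : ℂ)).smul_const v).const_add c)
    simp only [zero_smul, add_zero, id, one_smul] at h
    exact h
  calc ‖fderiv ℂ f c v‖ = ‖deriv (fun t : ℂ => f (c + t • v)) 0‖ := by rw [hderiv.deriv]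
    _ ≤ M / ρ := Complex.norm_deriv_le_of_forall_mem_sphere_norm_le hρ
        (hdline.diffContOnCl_ball subset_rfl) fun t ht => hM _ (hline t (sphere_subset_closedBall ht))
    _ = 2 * M / δ * ‖v‖ := by rw [hρdef]; field_simp

theorem norm_sub_le_of_forall_mem_ball_norm_le {f : E → F} {c : E} {R δ M : ℝ} (hδ : 0 < δ)
    (hd : DifferentiableOn ℂ f (ball c (R + δ))) (hM : ∀ x ∈ ball c (R + δ), ‖f x‖ ≤ M)
    {x y : E} (hx : x ∈ ball c R) (hy : y ∈ ball c R) :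
    ‖f y - f x‖ ≤ 2 * M / δ * ‖y - x‖ := by
  have hsub : ∀ z ∈ ball c R, ball z δ ⊆ ball c (R + δ) := fun z hz =>
    ball_subset_ball' (by rw [mem_ball] at hz; linarith)
  refine (convex_ball c R).norm_image_sub_le_of_norm_fderiv_le
    (fun z hz => hd.differentiableAt (isOpen_ball.mem_nhds (hsub z hz (mem_ball_self hδ))))
    (fun z hz => norm_fderiv_le_of_forall_mem_ball_norm_le hδ (hd.mono (hsub z hz))
      fun w hw => hM w (hsub z hz hw)) hx hy

/-- The Cauchy estimate applied to `y ↦ f y - f (y + (c - x))`, which is uniformly small by the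
mean value inequality. -/
theorem norm_fderiv_sub_fderiv_le {f : E → F} {c : E} {δ M : ℝ} (hδ : 0 < δ)
    (hd : DifferentiableOn ℂ f (ball c (3 * δ))) (hM : ∀ x ∈ ball c (3 * δ), ‖f x‖ ≤ M)
    {x : E} (hx : x ∈ ball c δ) :
    ‖fderiv ℂ f x - fderiv ℂ f c‖ ≤ 4 * M / δ ^ 2 * ‖x - c‖ := by
  set u := c - x
  rw [show 3 * δ = 2 * δ + δ by ring] at hd hM
  have hmem : ∀ y ∈ ball x δ, y ∈ ball c (2 * δ) ∧ y + u ∈ ball c (2 * δ) := by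
    intro y hy
    rw [mem_ball] at hx hy
    refine ⟨mem_ball.2 ((dist_triangle y x c).trans_lt (by linarith)), mem_ball.2 ?_⟩
    rw [show y + u = y + (c - x) from rfl, dist_eq_norm, show y + (c - x) - c = y - x by abel,
      ← dist_eq_norm]
    linarith
  have hdf : ∀ y ∈ ball c (2 * δ), DifferentiableAt ℂ f y := fun y hy =>
    hd.differentiableAt (isOpen_ball.mem_nhds (ball_subset_ball (by linarith) hy))
  have hdh : DifferentiableOn ℂ (fun y => f y - f (y + u)) (ball x δ) := fun y hy =>
    ((hdf y (hmem y hy).1).sub ((hdf _ (hmem y hy).2).comp y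
      (differentiableAt_id.add_const u))).differentiableWithinAt
  have hh : ∀ y ∈ ball x δ, ‖f y - f (y + u)‖ ≤ 2 * M / δ * ‖u‖ := by
    intro y hy
    rw [← norm_neg, neg_sub]
    simpa using norm_sub_le_of_forall_mem_ball_norm_le hδ hd hM (hmem y hy).1 (hmem y hy).2
  have hfd : fderiv ℂ (fun y => f y - f (y + u)) x = fderiv ℂ f x - fderiv ℂ f c := by
    have hxu : x + u = c := add_sub_cancel x c
    have hc : DifferentiableAt ℂ f (x + u) := hxu ▸ hdf c (mem_ball_self (by positivity))
    rw [fderiv_fun_sub (hdf x (hmem x (mem_ball_self hδ)).1)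
      (show DifferentiableAt ℂ (fun y => f (y + u)) x from hc.comp x (by fun_prop)),
      fderiv_comp_add_right, hxu]
  calc ‖fderiv ℂ f x - fderiv ℂ f c‖ ≤ 2 * (2 * M / δ * ‖u‖) / δ :=
        hfd ▸ norm_fderiv_le_of_forall_mem_ball_norm_le hδ hdh hh
    _ = 4 * M / δ ^ 2 * ‖x - c‖ := by rw [norm_sub_rev]; ring

theorem DifferentiableOn.continuousOn_fderiv_of_isOpen {f : E → F} {s : Set E}
    (hf : DifferentiableOn ℂ f s) (hs : IsOpen s) : ContinuousOn (fderiv ℂ f) s := by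
  intro c hc
  refine ContinuousAt.continuousWithinAt ?_
  have hopen : IsOpen (s ∩ (fun x => ‖f x‖) ⁻¹' Iio (‖f c‖ + 1)) :=
    hf.continuousOn.norm.isOpen_inter_preimage hs isOpen_Iio
  obtain ⟨ε, hε, hball⟩ := Metric.isOpen_iff.1 hopen c ⟨hc, by simp⟩
  have hδ : 0 < ε / 3 := by positivity
  rw [show ε = 3 * (ε / 3) by ring] at hball
  refine continuousAt_of_locally_lipschitz hδ (4 * (‖f c‖ + 1) / (ε / 3) ^ 2) fun x hx => ?_
  rw [dist_eq_norm, dist_eq_norm]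
  exact norm_fderiv_sub_fderiv_le hδ (hf.mono fun y hy => (hball hy).1)
    (fun y hy => (hball hy).2.le) (mem_ball.2 hx)

end CauchyEstimates

section CircleIntegral

variable {P F : Type*} [NormedAddCommGroup P] [NormedSpace ℂ P]
  [NormedAddCommGroup F] [NormedSpace ℂ F]

theorem hasFDerivAt_circleIntegral_of_dominated {g : P → ℂ → F} {g' : P → ℂ → P →L[ℂ] F}
    {p : P} {s : Set P} {c : ℂ} {R C : ℝ} (hR : 0 ≤ R) (hs : s ∈ 𝓝 p)
    (hg : ∀ x ∈ s, ContinuousOn (g x) (sphere c R)) (hg' : ContinuousOn (g' p) (sphere c R))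
    (hbound : ∀ x ∈ s, ∀ ζ ∈ sphere c R, ‖g' x ζ‖ ≤ C)
    (hderiv : ∀ x ∈ s, ∀ ζ ∈ sphere c R, HasFDerivAt (g · ζ) (g' x ζ) x) :
    HasFDerivAt (fun x => ∮ ζ in C(c, R), g x ζ) (∮ ζ in C(c, R), g' p ζ) p := by
  have hcont : ∀ x ∈ s, Continuous fun θ => deriv (circleMap c R) θ • g x (circleMap c R θ) :=
    fun x hx => by
      rw [funext (deriv_circleMap c R)]
      exact (by fun_prop : Continuous fun θ => circleMap 0 R θ * Complex.I).smul
        ((hg x hx).comp_continuous (continuous_circleMap c R) (circleMap_mem_sphere c hR))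
  have hcont' : Continuous fun θ => deriv (circleMap c R) θ • g' p (circleMap c R θ) := by
    rw [funext (deriv_circleMap c R)]
    exact (by fun_prop : Continuous fun θ => circleMap 0 R θ * Complex.I).smul
      (hg'.comp_continuous (continuous_circleMap c R) (circleMap_mem_sphere c hR))
  refine intervalIntegral.hasFDerivAt_integral_of_dominated_of_fderiv_le (bound := fun _ => R * C)
    hs (eventually_of_mem hs fun x hx => (hcont x hx).aestronglyMeasurable)
    ((hcont p (mem_of_mem_nhds hs)).intervalIntegrable _ _) hcont'.aestronglyMeasurable
    (Eventually.of_forall fun θ _ x hx => ?_) intervalIntegrable_const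
    (Eventually.of_forall fun θ _ x hx =>
      (hderiv x hx _ (circleMap_mem_sphere c hR θ)).const_smul _)
  rw [norm_smul, deriv_circleMap, norm_mul, Complex.norm_I, mul_one, norm_circleMap_zero,
    abs_of_nonneg hR]
  exact mul_le_mul_of_nonneg_left (hbound x hx _ (circleMap_mem_sphere c hR θ)) hR

/-- The integrand is uniformly bounded on a tube `ball p ε ×ˢ sphere c R` by compactness of the
circle, and the Cauchy estimate turns this into the domination of its parameter derivative. -/
theorem differentiableAt_circleIntegral_of_differentiableOn {G : P × ℂ → F} {O : Set (P × ℂ)}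
    (hO : IsOpen O) (hG : DifferentiableOn ℂ G O) {p : P} {c : ℂ} {R : ℝ} (hR : 0 ≤ R)
    (hpO : ∀ ζ ∈ sphere c R, (p, ζ) ∈ O) :
    DifferentiableAt ℂ (fun x => ∮ ζ in C(c, R), G (x, ζ)) p := by
  obtain ⟨M, hM⟩ := (isCompact_sphere c R).exists_bound_of_continuousOn
    (hG.continuousOn.comp (by fun_prop : ContinuousOn (fun ζ => (p, ζ)) _) hpO)
  have hO' : IsOpen (O ∩ (fun z => ‖G z‖) ⁻¹' Iio (M + 1)) :=
    hG.continuousOn.norm.isOpen_inter_preimage hO isOpen_Iio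
  obtain ⟨ε, hε, htube⟩ := Metric.eventually_nhds_iff_ball.1 <|
    (isCompact_sphere c R).eventually_forall_of_forall_eventually
      (P := fun x ζ => (x, ζ) ∈ O ∩ (fun z => ‖G z‖) ⁻¹' Iio (M + 1)) fun ζ hζ =>
      hO'.mem_nhds ⟨hpO ζ hζ, show ‖G (p, ζ)‖ < M + 1 from (hM ζ hζ).trans_lt (by linarith)⟩
  have hdiff : ∀ x ∈ ball p ε, ∀ ζ ∈ sphere c R, DifferentiableAt ℂ (fun y => G (y, ζ)) x :=
    fun x hx ζ hζ => (hG.differentiableAt (hO.mem_nhds (htube x hx ζ hζ).1)).comp x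
      (by fun_prop)
  have hδ : 0 < ε / 2 := by positivity
  have hsub : ∀ x ∈ ball p (ε / 2), ball x (ε / 2) ⊆ ball p ε := fun x hx =>
    ball_subset_ball' (by rw [mem_ball] at hx; linarith)
  have hfderiv : ∀ ζ ∈ sphere c R,
      fderiv ℂ (fun y => G (y, ζ)) p = (fderiv ℂ G (p, ζ)).comp (ContinuousLinearMap.inl ℂ P ℂ) :=
    fun ζ hζ => ((hG.differentiableAt (hO.mem_nhds (hpO ζ hζ))).hasFDerivAt.comp p
      (hasFDerivAt_prodMk_left p ζ)).fderiv
  refine (hasFDerivAt_circleIntegral_of_dominated (g := fun x ζ => G (x, ζ))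
    (g' := fun x ζ => fderiv ℂ (fun y => G (y, ζ)) x) (C := 2 * (M + 1) / (ε / 2))
    hR (ball_mem_nhds p hδ) (fun x hx => ?_) ?_ (fun x hx ζ hζ => ?_)
    fun x hx ζ hζ => (hdiff x (hsub x hx (mem_ball_self hδ)) ζ hζ).hasFDerivAt).differentiableAt
  · exact hG.continuousOn.comp (by fun_prop)
      fun ζ hζ => (htube x (hsub x hx (mem_ball_self hδ)) ζ hζ).1
  · exact (((hG.continuousOn_fderiv_of_isOpen hO).comp (by fun_prop) hpO).clm_comp
      continuousOn_const).congr hfderiv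
  · exact norm_fderiv_le_of_forall_mem_ball_norm_le hδ
      (fun y hy => (hdiff y (hsub x hx hy) ζ hζ).differentiableWithinAt)
      fun y hy => (htube y (hsub x hx hy) ζ hζ).2.le

end CircleIntegral

theorem cauchy_integral_construction_general {E : Type*} [NormedAddCommGroup E] [NormedSpace ℂ E]
    (U : Set E) (r : ℝ) (hr : 0 < r)
    (W : Set (ℂ × E)) (hWopen : IsOpen W) (hWsub : sphere (0 : ℂ) r ×ˢ U ⊆ W)
    (f : ℂ × E → ℂ) (hf : DifferentiableOn ℂ f W)
    (F : ℂ × E → ℂ)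
    (hF : ∀ p : ℂ × E,
      F p = (2 * Real.pi * Complex.I)⁻¹ * ∮ ζ in C(0, r), f (ζ, p.2) / (ζ - p.1)) :
    DifferentiableOn ℂ F (ball (0 : ℂ) r ×ˢ U) ∧
      ∀ w ∈ U,
        (∃ V : Set ℂ, IsOpen V ∧ closedBall (0 : ℂ) r ⊆ V ∧
          DifferentiableOn ℂ (fun z => f (z, w)) V) →
        ∀ z ∈ ball (0 : ℂ) r, F (z, w) = f (z, w) := by
  rw [funext hF]
  refine ⟨fun p ⟨hp₁, hp₂⟩ => ?_, fun w _ ⟨V, _, hV, hfV⟩ z hz => ?_⟩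
  · have hkernel : DifferentiableOn ℂ (fun q : (ℂ × E) × ℂ => f (q.2, q.1.2) / (q.2 - q.1.1))
        {q | (q.2, q.1.2) ∈ W ∧ q.2 ≠ q.1.1} := by
      intro q ⟨hqW, hq⟩
      have hnum : DifferentiableAt ℂ (fun q : (ℂ × E) × ℂ => f (q.2, q.1.2)) q :=
        (hf.differentiableAt (hWopen.mem_nhds hqW)).comp q (by fun_prop)
      have hne := sub_ne_zero.2 hq
      simp_rw [div_eq_mul_inv]
      exact (hnum.mul (by fun_prop (disch := exact hne))).differentiableWithinAt
    have hopen : IsOpen {q : (ℂ × E) × ℂ | (q.2, q.1.2) ∈ W ∧ q.2 ≠ q.1.1} :=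
      (hWopen.preimage (by fun_prop)).inter (isOpen_ne_fun (by fun_prop) (by fun_prop))
    exact ((differentiableAt_circleIntegral_of_differentiableOn hopen hkernel hr.le
      fun ζ hζ => ⟨hWsub ⟨hζ, hp₂⟩, sphere_disjoint_ball.ne_of_mem hζ hp₁⟩).const_mul
      _).differentiableWithinAt
  · have hcauchy := ((hfV.mono (closure_ball_subset_closedBall.trans hV)).diffContOnCl
      ).circleIntegral_sub_inv_smul hz
    simp only [smul_eq_mul, ← div_eq_inv_mul] at hcauchy
    dsimp only
    rw [hcauchy, inv_mul_cancel_left₀ Complex.two_pi_I_ne_zero]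

/-- The Cauchy-integral construction used in the paper's proof of the Hartogs extension
theorem (Remark 1.3f): `F (z, w) = (2πi)⁻¹ ∮_{ζ ∈ C(0,r)} f (ζ, w) / (ζ - z) dζ` is
holomorphic on `ball 0 r ×ˢ U` and agrees with `f` where `f` is holomorphic in the
first variable on a neighborhood of the closed ball. -/
theorem cauchy_integral_construction {E : Type*} [NormedAddCommGroup E] [NormedSpace ℂ E]
    [CompleteSpace E]
    (U : Set E) (hUopen : IsOpen U) (r : ℝ) (hr : 0 < r)
    (W : Set (ℂ × E)) (hWopen : IsOpen W) (hWsub : sphere (0 : ℂ) r ×ˢ U ⊆ W)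
    (f : ℂ × E → ℂ) (hf : DifferentiableOn ℂ f W)
    (F : ℂ × E → ℂ)
    (hF : ∀ p : ℂ × E,
      F p = (2 * Real.pi * Complex.I)⁻¹ * ∮ ζ in C(0, r), f (ζ, p.2) / (ζ - p.1)) :
    DifferentiableOn ℂ F (ball (0 : ℂ) r ×ˢ U) ∧
      ∀ w ∈ U,
        (∃ V : Set ℂ, IsOpen V ∧ closedBall (0 : ℂ) r ⊆ V ∧
          DifferentiableOn ℂ (fun z => f (z, w)) V) →
        ∀ z ∈ ball (0 : ℂ) r, F (z, w) = f (z, w) :=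
  cauchy_integral_construction_general U r hr W hWopen hWsub f hf F hF
end

section
/- Let R be a commutative ring, I an ideal of R, and Q an injective R-module (Module.Injective R Q). Let N := {x ∈ Q | a • x = 0 for all a ∈ I} be the submodule of Q annihilated by I, endowed with its natural R⧸I-module structure (which exists since N is torsion by I). Then N is an injective R⧸I-module. -/
/-!
For an `R ⧸ I`-module `F`, every `R`-linear map `F → Q` kills `I` pointwise and hence lands in
`N = Q[I]`; so `Hom_{R/I}(F, N) = Hom_R(F, Q)`, and an extension problem for `N` over `R ⧸ I`
is an extension problem for `Q` over `R`, which the injectivity of `Q` solves.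
-/

universe v

open Module

theorem Module.IsTorsionBySet.of_isScalarTower {R S M : Type*} [CommRing R] [CommRing S]
    [Algebra R S] [AddCommGroup M] [Module R M] [Module S M] [IsScalarTower R S M] :
    IsTorsionBySet R M (RingHom.ker (algebraMap R S)) := fun x a => by
  rw [← algebraMap_smul S (a : R) x, RingHom.mem_ker.mp a.2, zero_smul]

theorem Submodule.map_mem_torsionBySet {R M Q : Type*} [CommRing R] [AddCommGroup M] [Module R M]
    [AddCommGroup Q] [Module R Q] {s : Set R} (hM : IsTorsionBySet R M s) (φ : M →ₗ[R] Q)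
    (x : M) : φ x ∈ Submodule.torsionBySet R Q s :=
  (Submodule.mem_torsionBySet_iff _ _).mpr fun a => by rw [← map_smul, hM, map_zero]

theorem Module.Injective.of_surjective_algebraMap {R S : Type*} [CommRing R] [CommRing S]
    [Algebra R S] (hS : Function.Surjective (algebraMap R S)) {Q : Type v} [AddCommGroup Q]
    [Module R Q] [Module.Injective R Q] (N : Submodule R Q) [Module S N] [IsScalarTower R S N]
    (hN : ∀ (X : Type v) [AddCommGroup X] [Module R X] [Module S X] [IsScalarTower R S X]
      (φ : X →ₗ[R] Q) (x : X), φ x ∈ N) :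
    Module.Injective S N := by
  refine ⟨fun X Y _ _ _ _ f hf g => ?_⟩
  let _ := Module.compHom X (algebraMap R S)
  let _ := Module.compHom Y (algebraMap R S)
  have : IsScalarTower R S X := .of_algebraMap_smul fun _ _ => rfl
  have : IsScalarTower R S Y := .of_algebraMap_smul fun _ _ => rfl
  obtain ⟨h, hh⟩ := Module.Injective.out (f.restrictScalars R) hf
    (N.subtype.comp (g.restrictScalars R))
  exact ⟨(h.codRestrict N (hN Y h)).extendScalarsOfSurjective hS, fun x => Subtype.ext (hh x)⟩

/-- Key step of Lemma 1.2a: if `Q` is an injective `R`-module and `I` is an ideal of `R`,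
then the submodule `N = {x ∈ Q | ∀ a ∈ I, a • x = 0}` of elements annihilated by `I`,
with its natural `R ⧸ I`-module structure, is an injective `R ⧸ I`-module. -/
theorem injective_torsionBySet_of_injective {R : Type*} [CommRing R] (I : Ideal R)
    (Q : Type*) [AddCommGroup Q] [Module R Q] (hQ : Module.Injective R Q) :
    Module.Injective (R ⧸ I) (Submodule.torsionBySet R Q I) := by
  refine Module.Injective.of_surjective_algebraMap Ideal.Quotient.mk_surjective _
    fun X _ _ _ _ φ x => Submodule.map_mem_torsionBySet ?_ φ x
  simpa only [Ideal.Quotient.algebraMap_eq, Ideal.mk_ker] using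
    IsTorsionBySet.of_isScalarTower (R := R) (S := R ⧸ I) (M := X)
end

section
/- Let R be a commutative ring, M an R-module, and f, g : M →ₗ[R] M linear endomorphisms satisfying the commutation relation g ∘ f = f ∘ g + id. Then for every integer k ≥ 1 and every m ∈ M with f^k m = 0, one has f^(k−1) (f (g m) + k • m) = 0; that is, the operator f ∘ g + k • id maps the kernel of f^k into the kernel of f^(k−1). -/
theorem mul_pow_succ_eq_of_mul_eq_add_one {A : Type*} [Semiring A] {f g : A}
    (h : g * f = f * g + 1) (n : ℕ) :
    g * f ^ (n + 1) = f ^ (n + 1) * g + (n + 1) • f ^ n := by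
  induction n with
  | zero => simpa using h
  | succ n ih =>
    calc g * f ^ (n + 2) = (g * f ^ (n + 1)) * f := by rw [mul_assoc, ← pow_succ]
      _ = f ^ (n + 1) * (g * f) + (n + 1) • f ^ (n + 1) := by
        rw [ih, add_mul, mul_assoc, smul_mul_assoc, ← pow_succ]
      _ = f ^ (n + 2) * g + (n + 2) • f ^ (n + 1) := by
        rw [h, mul_add, mul_one, ← mul_assoc, ← pow_succ, succ_nsmul _ (n + 1)]
        abel

theorem heisenberg_ker_pow_general {R M : Type*} [CommRing R] [AddCommGroup M] [Module R M]
    (f g : M →ₗ[R] M) (h : g ∘ₗ f = f ∘ₗ g + LinearMap.id)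
    (k : ℕ) (m : M) (hm : (f ^ k) m = 0) :
    (f ^ (k - 1)) (f (g m) + k • m) = 0 := by
  cases k with
  | zero => simp_all
  | succ n =>
    -- `h` is accepted as `g * f = f * g + 1`: in `Module.End`, `*` is `∘ₗ` and `1` is `id` by definition
    have hcomm := congr($(mul_pow_succ_eq_of_mul_eq_add_one h n) m)
    simp only [Module.End.mul_apply, hm, map_zero, LinearMap.add_apply,
      LinearMap.smul_apply] at hcomm
    rw [Nat.add_sub_cancel, map_add, map_nsmul, ← Module.End.mul_apply, ← pow_succ, hcomm]

/-- Claim (A.7.4) in the paper's proof of Kashiwara's equivalence: if `g ∘ f = f ∘ g + id`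
(the Heisenberg relation) and `f ^ k m = 0` with `k ≥ 1`, then
`f ^ (k - 1) (f (g m) + k • m) = 0`, i.e. `f ∘ g + k • id` maps `ker (f ^ k)` into
`ker (f ^ (k - 1))`. -/
theorem heisenberg_ker_pow {R M : Type*} [CommRing R] [AddCommGroup M] [Module R M]
    (f g : M →ₗ[R] M) (h : g ∘ₗ f = f ∘ₗ g + LinearMap.id)
    (k : ℕ) (hk : 1 ≤ k) (m : M) (hm : (f ^ k) m = 0) :
    (f ^ (k - 1)) (f (g m) + k • m) = 0 :=
  heisenberg_ker_pow_general f g h k m hm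
end

section
/- Let K be a field of characteristic zero, M a K-vector space, and f, g : M →ₗ[K] M linear endomorphisms satisfying the commutation relation g ∘ f = f ∘ g + id. Assume that every element of M is annihilated by some power of f, i.e. for every m ∈ M there exists k ∈ ℕ with f^k m = 0. Then the family of subspaces M_k := ker(f ∘ g + k • id), indexed by integers k ≥ 1, is independent and its supremum is all of M; in other words, M is the internal direct sum ⊕_{k ≥ 1} ker(f ∘ g + k • id). -/
/-!
Write `θ = f ∘ g`, so that `ker (θ + k)` is the `-k`-eigenspace of `θ`; independence is that of
eigenspaces for distinct eigenvalues. The relation gives `g θ = (θ + 1) g`, so `g` lowers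
eigenvalues of `θ` by one. If `f^(n+1) m = 0`, induction puts `f m` in the sum `S` of the
eigenspaces for `-1, -2, …`, hence `(θ + 1) m = g (f m)` in the sum `S'` of those for
`-2, -3, …`. On `S'` the operator `θ + 1` is invertible (characteristic zero), so `m` differs from
an element of `S'` by an element of `ker (θ + 1)`, and `m ∈ S`.
-/

namespace Module.End

theorem ker_add_nsmul_id_eq_eigenspace {R M : Type*} [CommRing R] [AddCommGroup M] [Module R M]
    (T : End R M) (n : ℕ) :
    LinearMap.ker (T + n • LinearMap.id) = eigenspace T (-(n : R)) := by
  ext x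
  simp [eq_neg_iff_add_eq_zero, Nat.cast_smul_eq_nsmul]

theorem eigenspace_le_map_sub_smul {K M : Type*} [Field K] [AddCommGroup M] [Module K M]
    {T : End K M} {μ ν : K} (hμν : μ ≠ ν) :
    eigenspace T μ ≤ (eigenspace T μ).map (T - ν • 1) := by
  intro x hx
  refine ⟨(μ - ν)⁻¹ • x, Submodule.smul_mem _ _ hx, ?_⟩
  rw [mem_eigenspace_iff] at hx
  simp [hx, smul_smul, ← sub_smul, inv_mul_cancel₀ (sub_ne_zero.mpr hμν)]

theorem map_eigenspace_comp_le_of_comp_eq {R M : Type*} [CommRing R] [AddCommGroup M]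
    [Module R M] {f g : End R M} (h : g ∘ₗ f = f ∘ₗ g + LinearMap.id) (μ : R) :
    (eigenspace (f ∘ₗ g) μ).map g ≤ eigenspace (f ∘ₗ g) (μ - 1) := by
  rintro _ ⟨x, hx, rfl⟩
  rw [SetLike.mem_coe, mem_eigenspace_iff] at hx
  have hgx := LinearMap.congr_fun h (g x)
  simp only [LinearMap.comp_apply, LinearMap.add_apply, LinearMap.id_apply] at hx hgx
  rw [mem_eigenspace_iff, LinearMap.comp_apply, sub_smul, one_smul, ← map_smul, ← hx, hgx]
  abel

theorem mem_iSup_eigenspace_of_pow_apply_eq_zero {K M : Type*} [Field K] [CharZero K]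
    [AddCommGroup M] [Module K M] {f g : End K M} (h : g ∘ₗ f = f ∘ₗ g + LinearMap.id)
    {n : ℕ} {m : M} (hm : (f ^ n) m = 0) :
    m ∈ ⨆ k : ℕ+, eigenspace (f ∘ₗ g) (-(k : K)) := by
  induction n generalizing m with
  | zero => simp_all
  | succ n ih =>
    set θ := f ∘ₗ g
    set S := ⨆ k : ℕ+, eigenspace θ (-(k : K))
    set S' := ⨆ k : ℕ+, eigenspace θ (-(k : K) - 1)
    have hS' : S' ≤ S := iSup_le fun k ↦ le_iSup_of_le (k + 1) (by push_cast; rw [neg_add'])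
    have hgfm : g (f m) ∈ S' := by
      have hfm : f m ∈ S := ih (by rwa [← mul_apply, ← pow_succ])
      refine (iSup_mono fun k ↦ map_eigenspace_comp_le_of_comp_eq h _) ?_
      rw [← Submodule.map_iSup]
      exact Submodule.mem_map_of_mem hfm
    have hS'_image : S' ≤ S'.map (θ - (-1 : K) • 1) :=
      iSup_le fun k ↦ (eigenspace_le_map_sub_smul (by simp)).trans
        (Submodule.map_mono (le_iSup (fun k : ℕ+ ↦ eigenspace θ (-(k : K) - 1)) k))
    obtain ⟨s, hs, hsm⟩ := hS'_image hgfm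
    have hms : m - s ∈ eigenspace θ (-1) := by
      have hθs : θ s + s = θ m + m := by
        simpa [θ, ← LinearMap.comp_apply g f, h] using hsm
      rw [mem_eigenspace_iff, map_sub, neg_one_smul, neg_sub]
      linear_combination (norm := module) -hθs
    have hS_neg_one : eigenspace θ (-1) ≤ S := le_iSup_of_le 1 (by simp)
    simpa using add_mem (hS_neg_one hms) (hS' hs)

end Module.End

/-- Decomposition (A.7.6) in the paper's proof of Kashiwara's equivalence: if
`g ∘ f = f ∘ g + id` and every element of `M` is annihilated by some power of `f`, then
`M` is the internal direct sum of the kernels `ker (f ∘ g + k • id)` for `k ≥ 1`. -/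
theorem kashiwara_direct_sum {K M : Type*} [Field K] [CharZero K] [AddCommGroup M]
    [Module K M] (f g : M →ₗ[K] M) (h : g ∘ₗ f = f ∘ₗ g + LinearMap.id)
    (hnil : ∀ m : M, ∃ k : ℕ, (f ^ k) m = 0) :
    iSupIndep (fun k : ℕ+ => LinearMap.ker (f ∘ₗ g + (k : ℕ) • LinearMap.id)) ∧
      (⨆ k : ℕ+, LinearMap.ker (f ∘ₗ g + (k : ℕ) • LinearMap.id)) = ⊤ := by
  simp only [Module.End.ker_add_nsmul_id_eq_eigenspace]
  have hinj : Function.Injective fun k : ℕ+ ↦ -(k : K) := fun a b hab ↦ by simpa using hab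
  refine ⟨(Module.End.eigenspaces_iSupIndep (f ∘ₗ g)).comp hinj, eq_top_iff.mpr fun m _ ↦ ?_⟩
  obtain ⟨n, hn⟩ := hnil m
  exact Module.End.mem_iSup_eigenspace_of_pow_apply_eq_zero h hn
end

section
/- Let K be a field, M a K-vector space, and f, g : M →ₗ[K] M linear endomorphisms satisfying the commutation relation g ∘ f = f ∘ g + id; set θ := f ∘ g. For ν ∈ K let E(ν) denote the generalized eigenspace {m ∈ M | (θ − ν·id)^N m = 0 for some N ∈ ℕ}. Then: (a) f maps E(ν) into E(ν + 1) and g maps E(ν + 1) into E(ν), for every ν ∈ K; and (b) if ν ≠ −1, then f restricts to a bijection from E(ν) onto E(ν + 1), and g restricts to a bijection from E(ν + 1) onto E(ν). -/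
/-!
By associativity `(f ∘ g) ∘ f = f ∘ (g ∘ f)`, so `f` carries generalized eigenvectors of
`g ∘ f` to generalized eigenvectors of `f ∘ g` with the same eigenvalue, and `g` goes back. The
relation `g ∘ f = f ∘ g + 1` identifies the `(ν + 1)`-generalized eigenspace of `g ∘ f` with the
`ν`-generalized eigenspace of `f ∘ g`. On a generalized eigenspace for a unit eigenvalue `μ` an
endomorphism is `μ` plus a locally nilpotent operator, hence bijective; so `g ∘ f` and `f ∘ g` are
bijective there, which forces `f` and `g` to be.
-/

open Set

namespace Module.End

variable {R M N : Type*} [CommRing R] [AddCommGroup M] [Module R M] [AddCommGroup N] [Module R N]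

lemma maxGenEigenspace_add_smul_id (f : End R M) (μ ρ : R) :
    (f + ρ • LinearMap.id).maxGenEigenspace (μ + ρ) = f.maxGenEigenspace μ := by
  have shift : f + ρ • LinearMap.id - (μ + ρ) • 1 = f - μ • 1 := by module
  ext m
  simp only [mem_maxGenEigenspace, shift]

lemma mapsTo_maxGenEigenspace_of_comp_eq {A : End R M} {B : End R N} {φ : M →ₗ[R] N}
    (h : B ∘ₗ φ = φ ∘ₗ A) (μ : R) :
    MapsTo φ (A.maxGenEigenspace μ) (B.maxGenEigenspace μ) := by
  have shifted : (B - μ • 1) ∘ₗ φ = φ ∘ₗ (A - μ • 1) := by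
    rw [LinearMap.sub_comp, LinearMap.comp_sub, h, LinearMap.smul_comp, LinearMap.comp_smul]
    rfl
  intro m hm
  obtain ⟨k, hk⟩ := (mem_maxGenEigenspace A μ m).1 hm
  refine (mem_maxGenEigenspace B μ (φ m)).2 ⟨k, ?_⟩
  rw [← LinearMap.comp_apply, commute_pow_left_of_commute shifted, LinearMap.comp_apply, hk,
    map_zero]

lemma mapsTo_maxGenEigenspace_comp (f : M →ₗ[R] N) (g : N →ₗ[R] M) (μ : R) :
    MapsTo f (maxGenEigenspace (g ∘ₗ f) μ) (maxGenEigenspace (f ∘ₗ g) μ) :=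
  mapsTo_maxGenEigenspace_of_comp_eq (LinearMap.comp_assoc f g f) μ

-- On the `k`-th generalized eigenspace, `f` is the unit `μ` plus a commuting nilpotent.
lemma bijOn_genEigenspace (f : End R M) {μ : R} (hμ : IsUnit μ) (k : ℕ) :
    BijOn f (f.genEigenspace μ k) (f.genEigenspace μ k) := by
  have hmaps := mapsTo_genEigenspace_of_comm (Commute.refl f) μ k
  have hunit : IsUnit (f.restrict hmaps) := by
    have split : f.restrict hmaps = algebraMap R _ μ +
        (f - algebraMap R (End R M) μ).restrict
          (mapsTo_genEigenspace_of_comm (Algebra.mul_sub_algebraMap_commutes f μ) μ k) := by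
      ext x
      change f x = μ • (x : M) + (f - algebraMap R (End R M) μ) x
      simp
    rw [split]
    exact (isNilpotent_restrict_sub_algebraMap f μ k).isUnit_add_left_of_commute
      (hμ.map _) (Algebra.commute_algebraMap_right μ _)
  obtain ⟨hinj, hsurj⟩ := (isUnit_iff _).1 hunit
  exact ⟨hmaps, hmaps.restrict_inj.1 hinj, hmaps.restrict_surjective_iff.1 hsurj⟩

lemma bijOn_maxGenEigenspace (f : End R M) {μ : R} (hμ : IsUnit μ) :
    BijOn f (f.maxGenEigenspace μ) (f.maxGenEigenspace μ) := by
  have mem_genEigenspace {m : M} (hm : m ∈ f.maxGenEigenspace μ) :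
      ∃ k : ℕ, m ∈ f.genEigenspace μ k := by
    simpa [mem_genEigenspace_nat] using (mem_maxGenEigenspace f μ m).1 hm
  refine ⟨mapsTo_maxGenEigenspace_of_comm (Commute.refl f) μ,
    LinearMap.injOn_of_disjoint_ker subset_rfl ?_, fun m hm => ?_⟩
  · refine Submodule.disjoint_def.2 fun m hm hfm => ?_
    obtain ⟨k, hk⟩ := mem_genEigenspace hm
    exact (bijOn_genEigenspace f hμ k).injOn hk (zero_mem _) (by simpa using hfm)
  · obtain ⟨k, hk⟩ := mem_genEigenspace hm
    obtain ⟨n, hn, rfl⟩ := (bijOn_genEigenspace f hμ k).surjOn hk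
    exact ⟨n, genEigenspace_le_maximal f μ k hn, rfl⟩

theorem bijOn_maxGenEigenspace_comp (f : M →ₗ[R] N) (g : N →ₗ[R] M) {μ : R} (hμ : IsUnit μ) :
    BijOn f (maxGenEigenspace (g ∘ₗ f) μ) (maxGenEigenspace (f ∘ₗ g) μ) :=
  ⟨mapsTo_maxGenEigenspace_comp f g μ,
    (bijOn_maxGenEigenspace (g ∘ₗ f) hμ).injOn.of_comp (g := g),
    (bijOn_maxGenEigenspace (f ∘ₗ g) hμ).surjOn.of_comp (f := g)
      (mapsTo_maxGenEigenspace_comp g f μ)⟩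

end Module.End

/-- Claim (1.3.1) of Remark 1.3a: for endomorphisms with `g ∘ f = f ∘ g + id` and
`θ := f ∘ g`, the map `f` sends the generalized `ν`-eigenspace of `θ` into the
generalized `(ν+1)`-eigenspace and `g` goes the other way; if `ν ≠ -1` these maps are
bijections between the two generalized eigenspaces. -/
theorem heisenberg_gen_eigenspace_shift {K M : Type*} [Field K] [AddCommGroup M]
    [Module K M] (f g : M →ₗ[K] M) (h : g ∘ₗ f = f ∘ₗ g + LinearMap.id) :
    (∀ ν : K,
      (∀ m ∈ Module.End.maxGenEigenspace (f ∘ₗ g) ν,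
        f m ∈ Module.End.maxGenEigenspace (f ∘ₗ g) (ν + 1)) ∧
      (∀ m ∈ Module.End.maxGenEigenspace (f ∘ₗ g) (ν + 1),
        g m ∈ Module.End.maxGenEigenspace (f ∘ₗ g) ν)) ∧
    (∀ ν : K, ν ≠ -1 →
      Set.BijOn f (Module.End.maxGenEigenspace (f ∘ₗ g) ν : Set M)
        (Module.End.maxGenEigenspace (f ∘ₗ g) (ν + 1) : Set M) ∧
      Set.BijOn g (Module.End.maxGenEigenspace (f ∘ₗ g) (ν + 1) : Set M)
        (Module.End.maxGenEigenspace (f ∘ₗ g) ν : Set M)) := by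
  open Module.End in
  have shift (ν : K) : maxGenEigenspace (f ∘ₗ g) ν = maxGenEigenspace (g ∘ₗ f) (ν + 1) := by
    simpa [h] using (maxGenEigenspace_add_smul_id (f ∘ₗ g) ν 1).symm
  refine ⟨fun ν => ⟨fun m hm => ?_, fun m hm => ?_⟩, fun ν hν => ?_⟩
  · exact mapsTo_maxGenEigenspace_comp f g (ν + 1) (shift ν ▸ hm)
  · exact shift ν ▸ mapsTo_maxGenEigenspace_comp g f (ν + 1) hm
  · have hunit : IsUnit (ν + 1) := Ne.isUnit (add_eq_zero_iff_eq_neg.not.2 hν)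
    rw [shift ν]
    exact ⟨bijOn_maxGenEigenspace_comp f g hunit, bijOn_maxGenEigenspace_comp g f hunit⟩
end
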